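/- arXiv:2301.08538 — 3 statements merged into one kernel-verified Lean document; each statement's English description precedes it below -/
import Mathlib

section
/- Over a field k, there exists a finitely generated kZ̄²-module that is not finitely presented. Concretely, let M : ℤ² → k-Vect be given by M(x,y) = k if x + y < 0 and M(x,y) = 0 otherwise, with identity maps k → k whenever both values are k. Then the extension M̄ to Z̄² (M̄(c) = lim_{d ≥ c, d ∈ ℤ²} M(d)) is generated by the single element at (−∞,−∞) — i.e. there is an epimorphism k[Mor_{Z̄²}((−∞,−∞),−)] → M̄ — but M̄ is not finitely presented as a kZ̄²-module. -/
open Finset CategoryTheory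

attribute [local instance 2000] Preorder.smallCategory

set_option linter.unusedSectionVars false
set_option synthInstance.maxHeartbeats 1000000
set_option maxHeartbeats 1000000

/-- The inclusion `ℤⁿ → Z̄ⁿ = (ℤ ∪ {−∞})ⁿ`. -/
def embZ {n : ℕ} (d : Fin n → ℤ) : Fin n → WithBot ℤ := fun i => (d i : WithBot ℤ)

lemma embZ_mono {n : ℕ} : Monotone (embZ (n := n)) :=
  fun _ _ h i => WithBot.coe_le_coe.mpr (h i)

/-- `Mbar` is the canonical extension of `M` to `Z̄ⁿ`: it restricts to `M` on `ℤⁿ`, and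
at every `c ∈ Z̄ⁿ` it is the limit `lim_{d ≥ c, d ∈ ℤⁿ} M(d)`, expressed elementwise. -/
def IsExtension {n : ℕ} {R : Type} [CommRing R] (M : (Fin n → ℤ) ⥤ ModuleCat R)
    (Mbar : (Fin n → WithBot ℤ) ⥤ ModuleCat R) : Prop :=
  (embZ_mono.functor ⋙ Mbar = M) ∧
  ∀ c : Fin n → WithBot ℤ,
    (∀ x y : Mbar.obj c,
      (∀ (d : Fin n → ℤ) (h : c ≤ embZ d),
        Mbar.map (homOfLE h) x = Mbar.map (homOfLE h) y) → x = y) ∧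
    (∀ f : ∀ d : Fin n → ℤ, c ≤ embZ d → Mbar.obj (embZ d),
      (∀ (d e : Fin n → ℤ) (hd : c ≤ embZ d) (he : c ≤ embZ e) (hde : d ≤ e),
        Mbar.map (homOfLE (embZ_mono hde)) (f d hd) = f e he) →
      ∃ x : Mbar.obj c, ∀ (d : Fin n → ℤ) (h : c ≤ embZ d), Mbar.map (homOfLE h) x = f d h)

/-- `M` is `S`-determined: the support of `M` is contained in the upset generated by `S`,
and whenever `c ≤ d` with `S ∩ ↓c = S ∩ ↓d`, the structure map `M(c ≤ d)` is an isomorphism. -/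
def SDet {C : Type*} [Preorder C] {R : Type} [CommRing R] (S : Set C) (M : C ⥤ ModuleCat R) :
    Prop :=
  (∀ c : C, (∃ x : M.obj c, x ≠ 0) → ∃ s ∈ S, s ≤ c) ∧
  ∀ (c d : C) (h : c ≤ d),
    S ∩ {x | x ≤ c} = S ∩ {x | x ≤ d} → IsIso (M.map (homOfLE h))

/-- The convex projection `ℤⁿ → [a,b]`. -/
def proj {n : ℕ} (a b : Fin n → ℤ) (c : Fin n → ℤ) : Fin n → ℤ :=
  fun i => max (a i) (min (c i) (b i))

lemma proj_mono {n : ℕ} (a b : Fin n → ℤ) : Monotone (proj a b) :=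
  fun _ _ h i => max_le_max le_rfl (min_le_min (h i) le_rfl)

/-- The interval `[a,b]` of `Z̄ⁿ` with infinitary points added:
in each coordinate either `−∞` or an integer of `[aᵢ, bᵢ]`. -/
def barIcc {n : ℕ} (a b : Fin n → ℤ) : Set (Fin n → WithBot ℤ) :=
  {c | ∀ i, c i = ⊥ ∨ ((a i : WithBot ℤ) ≤ c i ∧ c i ≤ (b i : WithBot ℤ))}

/-- The representable module `R[Mor(s, −)]`. -/
noncomputable def RepM {C : Type} [Preorder C] (R : Type) [CommRing R] (s : C) :
    C ⥤ ModuleCat R :=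
  coyoneda.obj (Opposite.op s) ⋙ ModuleCat.free R

/-- A functor module is finitely presented if it admits a presentation
`K → N → M → 0` by finite direct sums of representables. -/
noncomputable def FinPres {C : Type} [Preorder C] {R : Type} [CommRing R]
    (M : C ⥤ ModuleCat R) : Prop :=
  ∃ (p q : ℕ) (s : Fin p → C) (t : Fin q → C)
    (f : (∐ fun i => RepM R (s i)) ⟶ M)
    (g : (∐ fun j => RepM R (t j)) ⟶ (∐ fun i => RepM R (s i)))
    (w : g ≫ f = 0), Epi f ∧ Epi (Limits.kernel.lift f g w)

/-!
On integer points `Mbar` is one-dimensional on the half-plane `x + y < 0`, zero elsewhere, with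
isomorphisms inside the half-plane. Transporting a nonzero element of `Mbar(−1, −1)` along these
isomorphisms gives a compatible family on the half-plane, which glues to an element of
`Mbar(−∞, −∞)` generating `Mbar`.

The relations of a finite presentation sit at finitely many points `t_j`. Take `N` beyond every
finite second coordinate of the `t_j`; then `t_j ≤ (N, −N)` forces `t_j ≤ (N, −∞)`, and as maps
between representables are injective, an element at `(N, −∞)` of the free module that dies in `Mbar`
at `(N, −N)` already dies at `(N, −∞)`. The generator restricted to `(N, −∞)` contradicts this:
`Mbar(N, −N) = 0`, but it is nonzero at `(N, −N − 1)`.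
-/

open Limits

namespace RepM

variable {C : Type} [Preorder C] {R : Type} [CommRing R]

lemma map_injective (s : C) {c c' : C} (h : c ≤ c') :
    Function.Injective ((RepM R s).map (homOfLE h)) :=
  Finsupp.mapDomain_injective fun _ _ _ => Subsingleton.elim (α := s ⟶ c) _ _

lemma map_surjective {s c c' : C} (h : c ≤ c') (hs : s ≤ c' → s ≤ c) :
    Function.Surjective ((RepM R s).map (homOfLE h)) :=
  Finsupp.mapDomain_surjective fun g =>
    ⟨homOfLE (hs (leOfHom g)), Subsingleton.elim (α := s ⟶ c') _ _⟩

noncomputable def desc {s : C} (N : C ⥤ ModuleCat R) (x : N.obj s) : RepM R s ⟶ N where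
  app c := ModuleCat.freeDesc (TypeCat.ofHom fun h : s ⟶ c => N.map h x)
  naturality c c' φ := ModuleCat.free_hom_ext fun h => by
    simp [RepM, ModuleCat.free_map_apply]

lemma desc_app_freeMk {s : C} (N : C ⥤ ModuleCat R) (x : N.obj s) {c : C} (h : s ⟶ c) :
    (desc N x).app c (ModuleCat.freeMk h) = N.map h x :=
  ModuleCat.freeDesc_apply _ _

lemma epi_desc {s : C} (N : C ⥤ ModuleCat R) (x : N.obj s)
    (hx : ∀ (c : C) (y : N.obj c), ∃ (h : s ⟶ c) (a : R), y = a • N.map h x) :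
    Epi (desc N x) := by
  refine (NatTrans.epi_iff_epi_app _).2 fun c => (ModuleCat.epi_iff_surjective _).2 fun y => ?_
  obtain ⟨h, a, rfl⟩ := hx c y
  exact ⟨a • ModuleCat.freeMk h,
    (LinearMap.map_smul _ _ _).trans (congrArg (a • ·) (desc_app_freeMk N x h))⟩

end RepM

section

variable {C : Type} [Preorder C] {R : Type} [CommRing R] {ι : Type} [Finite ι]

lemma sigmaObj_map_eq (F : ι → C ⥤ ModuleCat R) {c c' : C} (φ : c ⟶ c') :
    (∐ F).map φ = inv (sigmaComparison ((evaluation C _).obj c) F) ≫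
      Limits.Sigma.map (fun i => (F i).map φ) ≫ sigmaComparison ((evaluation C _).obj c') F := by
  rw [IsIso.eq_inv_comp]
  refine Sigma.hom_ext _ _ fun i => ?_
  have h (d : C) := ι_comp_sigmaComparison ((evaluation C (ModuleCat R)).obj d) F i
  dsimp only [evaluation_obj_obj, evaluation_obj_map] at h ⊢
  rw [Sigma.ι_map_assoc, h c', reassoc_of% (h c)]
  exact ((Sigma.ι F i).naturality φ).symm

lemma sigmaObj_map_injective (F : ι → C ⥤ ModuleCat R) {c c' : C} (φ : c ⟶ c')
    (hF : ∀ i, Function.Injective ((F i).map φ)) : Function.Injective ((∐ F).map φ) := by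
  have (i : ι) : Mono ((F i).map φ) := (ModuleCat.mono_iff_injective _).2 (hF i)
  rw [← ModuleCat.mono_iff_injective, sigmaObj_map_eq]
  infer_instance

lemma sigmaObj_map_surjective (F : ι → C ⥤ ModuleCat R) {c c' : C} (φ : c ⟶ c')
    (hF : ∀ i, Function.Surjective ((F i).map φ)) : Function.Surjective ((∐ F).map φ) := by
  have (i : ι) : Epi ((F i).map φ) := (ModuleCat.epi_iff_surjective _).2 (hF i)
  rw [← ModuleCat.epi_iff_surjective, sigmaObj_map_eq]
  infer_instance

lemma exists_app_eq_of_epi_kernel_lift {P Q N : C ⥤ ModuleCat R} (f : P ⟶ N) (g : Q ⟶ P)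
    (w : g ≫ f = 0) [Epi (kernel.lift f g w)] (c : C) (v : P.obj c) (hv : f.app c v = 0) :
    ∃ u, g.app c u = v := by
  have hS : (ShortComplex.mk g f w).Exact := (ShortComplex.exact_iff_epi_kernel_lift _).2 ‹_›
  exact ((ShortComplex.moduleCat_exact_iff _).1 (hS.map ((evaluation C _).obj c))) v hv

theorem not_finPres_of_forall_finite (N : C ⥤ ModuleCat R)
    (h : ∀ T : Set C, T.Finite → ∃ (c c' : C) (hcc' : c ≤ c') (y : N.obj c),
      y ≠ 0 ∧ N.map (homOfLE hcc') y = 0 ∧ ∀ t ∈ T, t ≤ c' → t ≤ c) :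
    ¬ FinPres N := by
  rintro ⟨p, q, s, t, f, g, w, hf, hl⟩
  obtain ⟨c, c', hcc', y, hy, hyc', ht⟩ := h (Set.range t) (Set.finite_range t)
  obtain ⟨v, rfl⟩ := (ModuleCat.epi_iff_surjective _).1
    ((NatTrans.epi_iff_epi_app f).1 hf c) y
  obtain ⟨u, hu⟩ := exists_app_eq_of_epi_kernel_lift f g w c'
    ((∐ fun i => RepM R (s i)).map (homOfLE hcc') v) (by rwa [NatTrans.naturality_apply])
  obtain ⟨u', rfl⟩ := sigmaObj_map_surjective _ (homOfLE hcc')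
    (fun j => RepM.map_surjective hcc' (ht _ ⟨j, rfl⟩)) u
  have hv : v = g.app c u' := sigmaObj_map_injective _ (homOfLE hcc')
    (fun i => RepM.map_injective (s i) hcc') (by rw [← hu, NatTrans.naturality_apply])
  exact hy (by rw [hv, ← NatTrans.comp_app_apply, w]; rfl)

end

lemma CategoryTheory.Functor.map_homOfLE_map_homOfLE {C : Type} [Preorder C] {R : Type} [Ring R]
    (F : C ⥤ ModuleCat R) {a b c : C} (h₁ : a ≤ b) (h₂ : b ≤ c) (x : F.obj a) :
    F.map (homOfLE h₂) (F.map (homOfLE h₁) x) = F.map (homOfLE (h₁.trans h₂)) x := by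
  rw [← homOfLE_comp h₁ h₂, F.map_comp]
  rfl

variable {k : Type} [Field k]

structure IsHalfPlaneExtension (Mbar : (Fin 2 → WithBot ℤ) ⥤ ModuleCat k) : Prop where
  ext {c : Fin 2 → WithBot ℤ} (x y : Mbar.obj c) :
    (∀ (d : Fin 2 → ℤ) (h : c ≤ embZ d), Mbar.map (homOfLE h) x = Mbar.map (homOfLE h) y) → x = y
  exists_lift {c : Fin 2 → WithBot ℤ} (f : ∀ d : Fin 2 → ℤ, c ≤ embZ d → Mbar.obj (embZ d)) :
    (∀ (d e : Fin 2 → ℤ) (hd : c ≤ embZ d) (he : c ≤ embZ e) (hde : d ≤ e),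
      Mbar.map (homOfLE (embZ_mono hde)) (f d hd) = f e he) →
    ∃ x : Mbar.obj c, ∀ (d : Fin 2 → ℤ) (h : c ≤ embZ d), Mbar.map (homOfLE h) x = f d h
  eq_zero {e : Fin 2 → ℤ} : ¬ e 0 + e 1 < 0 → ∀ x : Mbar.obj (embZ e), x = 0
  finrank_eq_one {e : Fin 2 → ℤ} : e 0 + e 1 < 0 → Module.finrank k (Mbar.obj (embZ e)) = 1
  map_bijective {e e' : Fin 2 → ℤ} (h : e ≤ e') : e' 0 + e' 1 < 0 →
    Function.Bijective (Mbar.map (homOfLE (embZ_mono h)))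

lemma IsExtension.isHalfPlaneExtension {M : (Fin 2 → ℤ) ⥤ ModuleCat k}
    {Mbar : (Fin 2 → WithBot ℤ) ⥤ ModuleCat k} (hext : IsExtension M Mbar)
    (hobj : ∀ c : Fin 2 → ℤ,
      (c 0 + c 1 < 0 → Nonempty (M.obj c ≅ ModuleCat.of k k)) ∧
      (¬ c 0 + c 1 < 0 → ∀ x : M.obj c, x = 0))
    (hmap : ∀ (c d : Fin 2 → ℤ) (h : c ≤ d),
      c 0 + c 1 < 0 → d 0 + d 1 < 0 → IsIso (M.map (homOfLE h))) :
    IsHalfPlaneExtension Mbar where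
  ext x y := (hext.2 _).1 x y
  exists_lift f := (hext.2 _).2 f
  eq_zero {e} he x :=
    let L := (eqToIso (Functor.congr_obj hext.1 e)).toLinearEquiv
    L.injective ((hobj e).2 he (L x) |>.trans L.map_zero.symm)
  finrank_eq_one {e} he := by
    obtain ⟨φ⟩ := (hobj e).1 he
    let L := (eqToIso (Functor.congr_obj hext.1 e)).toLinearEquiv.trans φ.toLinearEquiv
    exact L.finrank_eq.trans (Module.finrank_self k)
  map_bijective {e e'} h he' := by
    have hMiso : IsIso (M.map (homOfLE h)) := hmap e e' h (by linarith [h 0, h 1]) he'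
    have : IsIso (Mbar.map (homOfLE (embZ_mono h))) := by
      rw [show Mbar.map (homOfLE (embZ_mono h)) = _ from Functor.congr_hom hext.1 (homOfLE h)]
      exact IsIso.comp_isIso' (eqToIso (Functor.congr_obj hext.1 e)).isIso_hom
        (IsIso.comp_isIso' hMiso (eqToIso (Functor.congr_obj hext.1 e').symm).isIso_hom)
    exact ConcreteCategory.bijective_of_isIso _

namespace IsHalfPlaneExtension

variable {Mbar : (Fin 2 → WithBot ℤ) ⥤ ModuleCat k}

lemma eq_of_map_eq (hM : IsHalfPlaneExtension Mbar) {c : Fin 2 → WithBot ℤ} {e : Fin 2 → ℤ}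
    (hce : c ≤ embZ e) (he : e 0 + e 1 < 0) {x y : Mbar.obj c}
    (hxy : Mbar.map (homOfLE hce) x = Mbar.map (homOfLE hce) y) : x = y := by
  refine hM.ext x y fun d hcd => ?_
  by_cases hd : d 0 + d 1 < 0
  · have hcm : c ≤ embZ (d ⊓ e) := le_inf hcd hce
    have hm : Mbar.map (homOfLE hcm) x = Mbar.map (homOfLE hcm) y := by
      apply (hM.map_bijective (inf_le_right : d ⊓ e ≤ e) he).injective
      simp only [Functor.map_homOfLE_map_homOfLE]
      exact hxy
    rw [← Functor.map_homOfLE_map_homOfLE _ hcm (embZ_mono inf_le_left), hm,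
      Functor.map_homOfLE_map_homOfLE]
  · exact (hM.eq_zero hd _).trans (hM.eq_zero hd _).symm

lemma eq_zero_of_forall_not_neg (hM : IsHalfPlaneExtension Mbar) {c : Fin 2 → WithBot ℤ}
    (hc : ∀ e : Fin 2 → ℤ, c ≤ embZ e → ¬ e 0 + e 1 < 0) (x : Mbar.obj c) : x = 0 :=
  hM.ext x 0 fun e hce => by rw [map_zero]; exact hM.eq_zero (hc e hce) _

lemma exists_generator (hM : IsHalfPlaneExtension Mbar) :
    ∃ x : Mbar.obj ⊥, ∀ (e : Fin 2 → ℤ), e 0 + e 1 < 0 →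
      Mbar.map (homOfLE (bot_le : ⊥ ≤ embZ e)) x ≠ 0 := by
  let b : Fin 2 → ℤ := fun _ => -1
  have hb : b 0 + b 1 < 0 := by simp [b]
  have : Nontrivial (Mbar.obj (embZ b)) :=
    Module.nontrivial_of_finrank_eq_succ (hM.finrank_eq_one hb)
  obtain ⟨ξ, hξ⟩ := exists_ne (0 : Mbar.obj (embZ b))
  let pre (m : Fin 2 → ℤ) (hm : m ≤ b) : Mbar.obj (embZ m) :=
    Function.surjInv (hM.map_bijective hm hb).2 ξ
  have map_pre (m) (hm : m ≤ b) : Mbar.map (homOfLE (embZ_mono hm)) (pre m hm) = ξ :=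
    Function.surjInv_eq (hM.map_bijective hm hb).2 ξ
  have map_pre_pre {m m'} (hm' : m' ≤ b) (h : m ≤ m') :
      Mbar.map (homOfLE (embZ_mono h)) (pre m (h.trans hm')) = pre m' hm' := by
    apply (hM.map_bijective hm' hb).injective
    rw [Functor.map_homOfLE_map_homOfLE, map_pre m (h.trans hm'), map_pre m' hm']
  obtain ⟨x, hx⟩ := hM.exists_lift
    (fun e _ => Mbar.map (homOfLE (embZ_mono inf_le_left)) (pre (e ⊓ b) inf_le_right))
    fun d e _ _ hde => by
      rw [Functor.map_homOfLE_map_homOfLE,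
        ← map_pre_pre inf_le_right (inf_le_inf_right b hde), Functor.map_homOfLE_map_homOfLE]
  refine ⟨x, fun e he hx0 => hξ ?_⟩
  rw [hx e bot_le] at hx0
  rw [← map_pre (e ⊓ b) inf_le_right,
    (hM.map_bijective (inf_le_left : e ⊓ b ≤ e) he).injective (hx0.trans (map_zero _).symm),
    map_zero]

lemma exists_eq_smul_map (hM : IsHalfPlaneExtension Mbar) {x : Mbar.obj ⊥}
    (hx : ∀ (e : Fin 2 → ℤ), e 0 + e 1 < 0 → Mbar.map (homOfLE (bot_le : ⊥ ≤ embZ e)) x ≠ 0)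
    {c : Fin 2 → WithBot ℤ} (y : Mbar.obj c) : ∃ a : k, y = a • Mbar.map (homOfLE bot_le) x := by
  by_cases hc : ∃ e : Fin 2 → ℤ, c ≤ embZ e ∧ e 0 + e 1 < 0
  · obtain ⟨e, hce, he⟩ := hc
    have hxe : Mbar.map (homOfLE hce) (Mbar.map (homOfLE bot_le) x) ≠ 0 := by
      rw [Functor.map_homOfLE_map_homOfLE]
      exact hx e he
    obtain ⟨a, ha⟩ := (finrank_eq_one_iff_of_nonzero' _ hxe).1 (hM.finrank_eq_one he)
      (Mbar.map (homOfLE hce) y)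
    exact ⟨a, hM.eq_of_map_eq hce he (by rw [map_smul, ha])⟩
  · refine ⟨0, ?_⟩
    rw [zero_smul]
    exact hM.eq_zero_of_forall_not_neg (fun e hce he => hc ⟨e, hce, he⟩) y

theorem not_finPres (hM : IsHalfPlaneExtension Mbar) : ¬ FinPres Mbar := by
  obtain ⟨x, hx⟩ := hM.exists_generator
  refine not_finPres_of_forall_finite Mbar fun T hT => ?_
  obtain ⟨L, hL⟩ := (hT.image fun t => (t 1).unbotD 0).bddBelow
  let N := 1 - L
  let c : Fin 2 → WithBot ℤ := ![(N : WithBot ℤ), ⊥]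
  have hc (m : ℤ) : c ≤ embZ ![N, m] := by
    intro i; fin_cases i <;> simp [c, embZ]
  refine ⟨c, embZ ![N, -N], hc _, Mbar.map (homOfLE bot_le) x, fun h0 => ?_,
    hM.eq_zero (by simp) _, fun t ht htc i => ?_⟩
  · refine hx ![N, -N - 1] (by simp; omega) ?_
    rw [← Functor.map_homOfLE_map_homOfLE _ bot_le (hc _), h0, map_zero]
  · fin_cases i
    · simpa [c, embZ] using htc 0
    · have hLt := hL ⟨t, ht, rfl⟩
      have htc1 := htc 1
      cases h1 : t 1 with
      | bot => simp [c, h1]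
      | coe m => simp [h1, embZ] at hLt htc1; omega

end IsHalfPlaneExtension

theorem stmt15 (k : Type) [Field k]
    (M : (Fin 2 → ℤ) ⥤ ModuleCat k) (Mbar : (Fin 2 → WithBot ℤ) ⥤ ModuleCat k)
    (hext : IsExtension M Mbar)
    (hobj : ∀ c : Fin 2 → ℤ,
      (c 0 + c 1 < 0 → Nonempty (M.obj c ≅ ModuleCat.of k k)) ∧
      (¬ c 0 + c 1 < 0 → ∀ x : M.obj c, x = 0))
    (hmap : ∀ (c d : Fin 2 → ℤ) (h : c ≤ d),
      c 0 + c 1 < 0 → d 0 + d 1 < 0 → IsIso (M.map (homOfLE h))) :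
    (∃ f : RepM k (fun _ => (⊥ : WithBot ℤ)) ⟶ Mbar, Epi f) ∧ ¬ FinPres Mbar := by
  have hM := hext.isHalfPlaneExtension hobj hmap
  obtain ⟨x, hx⟩ := hM.exists_generator
  refine ⟨⟨RepM.desc Mbar x, RepM.epi_desc Mbar x fun c y => ?_⟩, hM.not_finPres⟩
  exact ⟨homOfLE bot_le, hM.exists_eq_smul_map hx y⟩
end

section
/- Let M be a pointwise finitely presented Rℤⁿ-module (each M(c) is a finitely presented R-module). If M is finitely determined — i.e. encoded by the convex projection π : ℤⁿ → [a,b] for some a ≤ b in ℤⁿ — then the extension M̄ to Z̄ⁿ is pointwise finitely presented: for every c ∈ Z̄ⁿ, M̄(c) ≅ M((β ∘ α)(c)), where β ∘ α is the extension of π to Z̄ⁿ given coordinatewise by (β∘α)(c)ᵢ = aᵢ if cᵢ < aᵢ or cᵢ = −∞, cᵢ if aᵢ ≤ cᵢ ≤ bᵢ, and bᵢ if cᵢ > bᵢ. -/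
open Finset CategoryTheory

attribute [local instance 2000] Preorder.smallCategory

set_option linter.unusedSectionVars false
set_option synthInstance.maxHeartbeats 1000000
set_option maxHeartbeats 1000000

/-- Replace each `−∞` coordinate of `c` by the corresponding coordinate of `a`. -/
def bfloor {n : ℕ} (a : Fin n → ℤ) (c : Fin n → WithBot ℤ) : Fin n → ℤ :=
  fun i => WithBot.unbotD (a i) (c i)

/-!
Fix `c ∈ Z̄ⁿ` and let `c₀ ∈ ℤⁿ` be `c` with every `−∞` replaced by the corresponding
coordinate of `a`, so that `c ≤ c₀`. For every integer `d ≥ c` we have `π (d ⊔ c₀) = π d`, so,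
`M` being encoded by `π`, the structure map `M(d) → M(d ⊔ c₀)` is an isomorphism. The diagram
`d ↦ M(d)` over `{d ≥ c}` is therefore constant beyond `c₀`, and its limit `M̄(c)` maps
isomorphically onto `M(c₀) ≅ M(π c₀)`, which is finitely presented.
-/

section PointwiseLimit

variable {J C : Type*} [SemilatticeSup J] [Preorder C] {R : Type} [CommRing R]

/-- The limit condition of `IsExtension` at `c`, for an arbitrary monotone `ι` in place of `embZ`. -/
def IsPointwiseLimitAt {ι : J → C} (hι : Monotone ι) (F : C ⥤ ModuleCat R) (c : C) : Prop :=
  (∀ x y : F.obj c,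
      (∀ (d : J) (h : c ≤ ι d), F.map (homOfLE h) x = F.map (homOfLE h) y) → x = y) ∧
    (∀ f : ∀ d : J, c ≤ ι d → F.obj (ι d),
      (∀ (d e : J) (hd : c ≤ ι d) (he : c ≤ ι e) (hde : d ≤ e),
        F.map (homOfLE (hι hde)) (f d hd) = f e he) →
      ∃ x : F.obj c, ∀ (d : J) (h : c ≤ ι d), F.map (homOfLE h) x = f d h)

lemma map_homOfLE_map_homOfLE_apply (F : C ⥤ ModuleCat R) {x y z : C} (h : x ≤ y) (k : y ≤ z)
    (m : F.obj x) : F.map (homOfLE k) (F.map (homOfLE h) m) = F.map (homOfLE (h.trans k)) m := by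
  rw [← ConcreteCategory.comp_apply, ← F.map_comp, homOfLE_comp]

theorem IsPointwiseLimitAt.isIso_map {ι : J → C} {hι : Monotone ι} {F : C ⥤ ModuleCat R} {c : C}
    (hlim : IsPointwiseLimitAt hι F c) {j₀ : J} (hc : c ≤ ι j₀)
    (hconst : ∀ d, c ≤ ι d → IsIso (F.map (homOfLE (hι (le_sup_left : d ≤ d ⊔ j₀))))) :
    IsIso (F.map (homOfLE hc)) := by
  have hsup (d : J) (hd : c ≤ ι d) :
      Function.Bijective (F.map (homOfLE (hι (le_sup_left : d ≤ d ⊔ j₀)))) :=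
    have := hconst d hd
    ConcreteCategory.bijective_of_isIso _
  have hj₀ (d : J) : j₀ ≤ d ⊔ j₀ := le_sup_right
  rw [ConcreteCategory.isIso_iff_bijective]
  constructor
  · intro x y hxy
    refine hlim.1 x y fun d hd => (hsup d hd).1 ?_
    rw [map_homOfLE_map_homOfLE_apply, map_homOfLE_map_homOfLE_apply,
      ← map_homOfLE_map_homOfLE_apply F hc (hι (hj₀ d)), hxy, map_homOfLE_map_homOfLE_apply]
  · intro y
    let back (d : J) (hd : c ≤ ι d) : F.obj (ι (d ⊔ j₀)) → F.obj (ι d) :=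
      (Equiv.ofBijective _ (hsup d hd)).symm
    have map_back (d : J) (hd : c ≤ ι d) (z : F.obj (ι (d ⊔ j₀))) :
        F.map (homOfLE (hι le_sup_left)) (back d hd z) = z :=
      Equiv.ofBijective_apply_symm_apply _ (hsup d hd) z
    let f (d : J) (hd : c ≤ ι d) : F.obj (ι d) := back d hd (F.map (homOfLE (hι (hj₀ d))) y)
    have hf (d e : J) (hd : c ≤ ι d) (he : c ≤ ι e) (hde : d ≤ e) :
        F.map (homOfLE (hι hde)) (f d hd) = f e he := by
      apply (hsup e he).1
      rw [map_homOfLE_map_homOfLE_apply, map_back e he,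
        ← map_homOfLE_map_homOfLE_apply F (hι le_sup_left) (hι (sup_le_sup_right hde j₀)),
        map_back d hd, map_homOfLE_map_homOfLE_apply]
    obtain ⟨x, hx⟩ := hlim.2 f hf
    refine ⟨x, (hx j₀ hc).trans ((hsup j₀ hc).1 ?_)⟩
    exact map_back j₀ hc _

end PointwiseLimit

theorem isIso_map_homOfLE_of_eq {C D A : Type*} [Preorder C] [Preorder D] [Category A]
    {π : C → D} {hπ : Monotone π} {N : D ⥤ A} {M : C ⥤ A} (η : hπ.functor ⋙ N ≅ M)
    {x y : C} (h : x ≤ y) (hxy : π x = π y) : IsIso (M.map (homOfLE h)) := by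
  rw [← NatIso.isIso_map_iff η]
  have : IsIso (hπ.functor.map (homOfLE h)) :=
    ⟨homOfLE hxy.ge, Subsingleton.elim _ _, Subsingleton.elim _ _⟩
  exact Functor.map_isIso N _

lemma le_embZ_bfloor {n : ℕ} (a : Fin n → ℤ) (c : Fin n → WithBot ℤ) : c ≤ embZ (bfloor a c) := by
  intro i
  simp only [embZ, bfloor]
  cases c i <;> simp

lemma proj_sup_bfloor {n : ℕ} (a b : Fin n → ℤ) {c : Fin n → WithBot ℤ} {d : Fin n → ℤ}
    (hd : c ≤ embZ d) : proj a b (d ⊔ bfloor a c) = proj a b d := by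
  funext i
  have hdi := hd i
  simp only [proj, bfloor, embZ, Pi.sup_apply] at hdi ⊢
  generalize c i = ci at hdi
  cases ci with
  | bot => simp only [WithBot.unbotD_bot]; omega
  | coe m => simp only [WithBot.coe_le_coe, WithBot.unbotD_coe] at hdi ⊢; omega

theorem stmt18_general (n : ℕ) (R : Type) [CommRing R] (a b : Fin n → ℤ)
    (M : (Fin n → ℤ) ⥤ ModuleCat R) (Mbar : (Fin n → WithBot ℤ) ⥤ ModuleCat R)
    (hext : IsExtension M Mbar)
    (hfp : ∀ c : Fin n → ℤ, Module.FinitePresentation R (M.obj c))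
    (henc : Nonempty ((proj_mono a b).functor ⋙ M ≅ M)) :
    ∀ c : Fin n → WithBot ℤ,
      Nonempty (Mbar.obj c ≅ M.obj (proj a b (bfloor a c))) ∧
      Module.FinitePresentation R (Mbar.obj c) := by
  obtain ⟨rfl, hlim⟩ := hext
  obtain ⟨η⟩ := henc
  intro c
  have hlimc : IsPointwiseLimitAt embZ_mono Mbar c := hlim c
  have : IsIso (Mbar.map (homOfLE (le_embZ_bfloor a c))) :=
    hlimc.isIso_map (le_embZ_bfloor a c) fun d hd =>
      isIso_map_homOfLE_of_eq η le_sup_left (proj_sup_bfloor a b hd).symm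
  let e : Mbar.obj c ≅ Mbar.obj (embZ (proj a b (bfloor a c))) :=
    asIso (Mbar.map (homOfLE (le_embZ_bfloor a c))) ≪≫ (η.app (bfloor a c)).symm
  have : Module.FinitePresentation R (Mbar.obj (embZ (proj a b (bfloor a c)))) := hfp _
  exact ⟨⟨e⟩, Module.FinitePresentation.of_equiv e.symm.toLinearEquiv⟩

theorem stmt18 (n : ℕ) (R : Type) [CommRing R] (a b : Fin n → ℤ) (hab : a ≤ b)
    (M : (Fin n → ℤ) ⥤ ModuleCat R) (Mbar : (Fin n → WithBot ℤ) ⥤ ModuleCat R)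
    (hext : IsExtension M Mbar)
    (hfp : ∀ c : Fin n → ℤ, Module.FinitePresentation R (M.obj c))
    (henc : Nonempty ((proj_mono a b).functor ⋙ M ≅ M)) :
    ∀ c : Fin n → WithBot ℤ,
      Nonempty (Mbar.obj c ≅ M.obj (proj a b (bfloor a c))) ∧
      Module.FinitePresentation R (Mbar.obj c) :=
  stmt18_general n R a b M Mbar hext hfp henc
end

section
/- Let M be a pointwise finitely presented Rℤⁿ-module. Then M is finitely determined (encoded by a convex projection π : ℤⁿ → [a,b] for some a ≤ b in ℤⁿ) if and only if its extension M̄ to Z̄ⁿ is S-determined for some finite subset S ⊆ Z̄ⁿ. -/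
open Finset CategoryTheory

attribute [local instance 2000] Preorder.smallCategory

set_option linter.unusedSectionVars false
set_option synthInstance.maxHeartbeats 1000000
set_option maxHeartbeats 1000000

/-!
If `M ≅ M ∘ π` for the projection `π` onto the box `[a, b]`, take `S = barIcc a b`. The points
of `S` below `c ∈ Z̄ⁿ` have a greatest element `barTrunc a b c`, so `S ∩ ↓c = S ∩ ↓d` forces
`barTrunc a b c = barTrunc a b d`. Then for every integral `e ≥ c` the integral point `e ⊔ d` has
the same projection as `e`, so `M(e) → M(e ⊔ d)` is an isomorphism; these points are cofinal
above `d`, and passing to the limits defining `M̄` gives `M̄(c) ≅ M̄(d)`.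

Conversely, for finite `S` choose `a < b` such that every finite coordinate of a point of `S`
lies in `(aᵢ, bᵢ]`; strictness at `aᵢ` makes clamping up to `aᵢ` invisible to `S`. Then `c`,
`π c` and `c ⊓ π c` have the same points of `S` below them, so `M̄` sends `c ⊓ π c ≤ c` and
`c ⊓ π c ≤ π c` to isomorphisms, natural in `c`, which compose to `M ∘ π ≅ M`.
-/

section PreorderFunctors

variable {C : Type*} [Preorder C]

theorem CategoryTheory.Functor.map_homOfLE_homOfLE_apply {R : Type*} [Ring R]
    (F : C ⥤ ModuleCat R) {x y z : C} (hxy : x ≤ y) (hyz : y ≤ z) (hxz : x ≤ z) (m : F.obj x) :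
    F.map (homOfLE hyz) (F.map (homOfLE hxy) m) = F.map (homOfLE hxz) m := by
  rw [← homOfLE_comp hxy hyz, F.map_comp]
  rfl

theorem isIso_map_homOfLE_of_eq_s19 {D : Type*} [Category D] (F : C ⥤ D) {f : C → C}
    (hf : Monotone f) (η : hf.functor ⋙ F ≅ F) {x y : C} (hxy : x ≤ y) (h : f x = f y) :
    IsIso (F.map (homOfLE hxy)) := by
  have : IsIso (homOfLE (hf hxy)) :=
    ⟨homOfLE h.ge, Subsingleton.elim _ _, Subsingleton.elim _ _⟩
  exact (NatIso.isIso_map_iff η _).mp (inferInstanceAs (IsIso (F.map (homOfLE (hf hxy)))))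

noncomputable def natIsoOfLE {D E : Type*} [Preorder D] [Category E] (F : D ⥤ E) {f g : C → D}
    (hf : Monotone f) (hg : Monotone g) (hfg : ∀ c, f c ≤ g c)
    (hiso : ∀ c, IsIso (F.map (homOfLE (hfg c)))) : hf.functor ⋙ F ≅ hg.functor ⋙ F :=
  NatIso.ofComponents (fun c => @asIso _ _ _ _ (F.map (homOfLE (hfg c))) (hiso c)) fun _ =>
    (F.map_comp _ _).symm.trans ((congrArg F.map (Subsingleton.elim _ _)).trans (F.map_comp _ _))

end PreorderFunctors

section ZBar

variable {n : ℕ}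

section BarInterval

variable {a b : Fin n → ℤ}

noncomputable def barIccFinset (a b : Fin n → ℤ) : Finset (Fin n → WithBot ℤ) :=
  Fintype.piFinset fun i => insert ⊥ ((Icc (a i) (b i)).image ((↑) : ℤ → WithBot ℤ))

theorem coe_barIccFinset : (barIccFinset a b : Set (Fin n → WithBot ℤ)) = barIcc a b := by
  ext s
  simp only [barIccFinset, barIcc, mem_coe, Fintype.mem_piFinset, mem_insert, mem_image, mem_Icc,
    Set.mem_ofPred_eq]
  refine forall_congr' fun i => or_congr_right ?_
  induction s i using WithBot.recBotCoe with
  | bot => simp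
  | coe m => simp

noncomputable def barTrunc (a b : Fin n → ℤ) (c : Fin n → WithBot ℤ) : Fin n → WithBot ℤ :=
  fun i => if c i < a i then ⊥ else min (c i) (b i)

theorem isGreatest_barTrunc (hab : a ≤ b) (c : Fin n → WithBot ℤ) :
    IsGreatest (barIcc a b ∩ {x | x ≤ c}) (barTrunc a b c) := by
  refine ⟨⟨fun i => ?_, fun i => ?_⟩, fun s ⟨hs, hsc⟩ i => ?_⟩
  · unfold barTrunc
    split_ifs with h
    · exact .inl rfl
    · exact .inr ⟨le_min (not_lt.mp h) (WithBot.coe_le_coe.mpr (hab i)), min_le_right _ _⟩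
  · unfold barTrunc
    split_ifs
    exacts [bot_le, min_le_left _ _]
  · rcases hs i with h | ⟨has, hsb⟩
    · exact h ▸ bot_le
    · unfold barTrunc
      rw [if_neg (not_lt.mpr (has.trans (hsc i)))]
      exact le_min (hsc i) hsb

theorem barTrunc_eq_of_inter_eq (hab : a ≤ b) {c d : Fin n → WithBot ℤ}
    (h : barIcc a b ∩ {x | x ≤ c} = barIcc a b ∩ {x | x ≤ d}) :
    barTrunc a b c = barTrunc a b d :=
  (isGreatest_barTrunc hab c).unique (h ▸ isGreatest_barTrunc hab d)

end BarInterval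

section Cofinal

/-- The integral point with `embZ (supEmbZ d e) = d ⊔ embZ e`. -/
def supEmbZ (d : Fin n → WithBot ℤ) (e : Fin n → ℤ) : Fin n → ℤ :=
  fun i => max (e i) ((d i).unbotD (e i))

theorem le_supEmbZ (d : Fin n → WithBot ℤ) (e : Fin n → ℤ) : e ≤ supEmbZ d e :=
  fun _ => le_max_left _ _

theorem le_embZ_supEmbZ (d : Fin n → WithBot ℤ) (e : Fin n → ℤ) : d ≤ embZ (supEmbZ d e) := by
  intro i
  simp only [embZ, supEmbZ]
  induction d i using WithBot.recBotCoe with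
  | bot => exact bot_le
  | coe m => exact WithBot.coe_le_coe.mpr (le_max_right _ _)

theorem monotone_supEmbZ (d : Fin n → WithBot ℤ) : Monotone (supEmbZ d) := by
  intro e g heg i
  simp only [supEmbZ]
  induction d i using WithBot.recBotCoe with
  | bot => simpa using heg i
  | coe m => exact max_le_max (heg i) le_rfl

theorem proj_supEmbZ {a b : Fin n → ℤ} (hab : a ≤ b) {c d : Fin n → WithBot ℤ}
    (h : barTrunc a b c = barTrunc a b d) {e : Fin n → ℤ} (he : c ≤ embZ e) :
    proj a b (supEmbZ d e) = proj a b e := by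
  funext i
  have hi := congrFun h i
  have hei := he i
  have habi := hab i
  simp only [barTrunc, embZ] at hi hei
  simp only [proj, supEmbZ]
  generalize c i = x at hi hei
  generalize d i = y at hi
  induction y using WithBot.recBotCoe with
  | bot => simp
  | coe m =>
    simp only [WithBot.unbotD_coe]
    induction x using WithBot.recBotCoe with
    | bot =>
      have hma : m < a i := by
        simp only [WithBot.bot_lt_coe, if_true, WithBot.coe_lt_coe, ← WithBot.coe_min] at hi
        split_ifs at hi <;> simp only [WithBot.bot_ne_coe] at hi
        assumption
      omega
    | coe k =>
      have hke : k ≤ e i := WithBot.coe_le_coe.mp hei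
      have hkm : (k < a i ∧ m < a i) ∨ (a i ≤ k ∧ a i ≤ m ∧ min k (b i) = min m (b i)) := by
        simp only [WithBot.coe_lt_coe, ← WithBot.coe_min] at hi
        split_ifs at hi <;>
          simp only [WithBot.bot_ne_coe, WithBot.coe_ne_bot, WithBot.coe_inj] at hi <;> omega
      omega

variable {R : Type} [CommRing R] {M : (Fin n → ℤ) ⥤ ModuleCat R}
  {Mbar : (Fin n → WithBot ℤ) ⥤ ModuleCat R}

theorem isIso_map_of_cofinal (hext : IsExtension M Mbar) {c d : Fin n → WithBot ℤ} (hcd : c ≤ d)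
    {E : (Fin n → ℤ) → (Fin n → ℤ)} (hE : Monotone E) (le_E : ∀ e, e ≤ E e)
    (le_embZ_E : ∀ e, d ≤ embZ (E e))
    (hiso : ∀ e, c ≤ embZ e → IsIso (Mbar.map (homOfLE (embZ_mono (le_E e))))) :
    IsIso (Mbar.map (homOfLE hcd)) := by
  have hbij e he := (ConcreteCategory.isIso_iff_bijective _).mp (hiso e he)
  refine (ConcreteCategory.isIso_iff_bijective _).mpr ⟨fun x y hxy => ?_, fun y => ?_⟩
  · refine (hext.2 c).1 x y fun e he => (hbij e he).1 ?_
    have hce := hcd.trans (le_embZ_E e)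
    rw [Mbar.map_homOfLE_homOfLE_apply _ _ hce, Mbar.map_homOfLE_homOfLE_apply _ _ hce,
      ← Mbar.map_homOfLE_homOfLE_apply hcd (le_embZ_E e) hce x,
      ← Mbar.map_homOfLE_homOfLE_apply hcd (le_embZ_E e) hce y, hxy]
  · choose f hf using fun e (he : c ≤ embZ e) =>
      (hbij e he).2 (Mbar.map (homOfLE (le_embZ_E e)) y)
    obtain ⟨x, hx⟩ := (hext.2 c).2 f fun e g he hg heg => (hbij g hg).1 (by
      have heEg := embZ_mono ((le_E e).trans (hE heg))
      rw [Mbar.map_homOfLE_homOfLE_apply _ _ heEg, hf g hg,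
        ← Mbar.map_homOfLE_homOfLE_apply (embZ_mono (le_E e)) (embZ_mono (hE heg)) heEg, hf e he,
        Mbar.map_homOfLE_homOfLE_apply _ _ (le_embZ_E g)])
    refine ⟨x, (hext.2 d).1 _ _ fun e he => (hbij e (hcd.trans he)).1 ?_⟩
    rw [Mbar.map_homOfLE_homOfLE_apply hcd he (hcd.trans he), hx e, hf,
      Mbar.map_homOfLE_homOfLE_apply he (embZ_mono (le_E e)) (le_embZ_E e)]

theorem sDet_barIccFinset (hext : IsExtension M Mbar) {a b : Fin n → ℤ} (hab : a ≤ b)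
    (η : (proj_mono a b).functor ⋙ M ≅ M) : SDet (barIccFinset a b : Set _) Mbar := by
  rw [coe_barIccFinset]
  refine ⟨fun c _ => ⟨barTrunc a b c, (isGreatest_barTrunc hab c).1⟩, fun c d hcd h => ?_⟩
  refine isIso_map_of_cofinal hext hcd (monotone_supEmbZ d) (le_supEmbZ d) (le_embZ_supEmbZ d)
    fun e he => ?_
  obtain rfl := hext.1
  exact isIso_map_homOfLE_of_eq_s19 _ (proj_mono a b) η (le_supEmbZ d e)
    (proj_supEmbZ hab (barTrunc_eq_of_inter_eq hab h) he).symm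

end Cofinal

theorem exists_bounds_of_finset (S : Finset (Fin n → WithBot ℤ)) :
    ∃ a b : Fin n → ℤ, a ≤ b ∧ ∀ s ∈ S, ∀ i (m : ℤ), s i = m → a i < m ∧ m ≤ b i := by
  obtain ⟨K, hK⟩ :=
    (insert 0 (S.biUnion fun s => univ.image fun i => |(s i).unbotD 0|)).exists_le
  refine ⟨fun _ => -K - 1, fun _ => K, fun _ => ?_, fun s hs i m hm => ?_⟩
  · have := hK 0 (mem_insert_self _ _)
    show -K - 1 ≤ K
    omega
  · have hmK : |m| ≤ K := hK _ <| mem_insert_of_mem <| mem_biUnion.mpr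
      ⟨s, hs, mem_image.mpr ⟨i, mem_univ _, by rw [hm, WithBot.unbotD_coe]⟩⟩
    obtain ⟨hKm, hmK⟩ := abs_le.mp hmK
    exact ⟨show -K - 1 < m by omega, hmK⟩

theorem le_embZ_proj_iff {a b : Fin n → ℤ} {s : Fin n → WithBot ℤ}
    (hs : ∀ i (m : ℤ), s i = m → a i < m ∧ m ≤ b i) (c : Fin n → ℤ) :
    s ≤ embZ (proj a b c) ↔ s ≤ embZ c := by
  refine forall_congr' fun i => ?_
  have hsi := hs i
  simp only [embZ, proj]
  generalize s i = x at hsi ⊢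
  induction x using WithBot.recBotCoe with
  | bot => simp
  | coe m =>
    have := hsi m rfl
    simp only [WithBot.coe_le_coe]
    omega

theorem embZ_inf (c d : Fin n → ℤ) : embZ (c ⊓ d) = embZ c ⊓ embZ d :=
  funext fun i => WithBot.coe_min (c i) (d i)

theorem nonempty_proj_iso_of_sDet {R : Type} [CommRing R]
    {Mbar : (Fin n → WithBot ℤ) ⥤ ModuleCat R} {S : Finset (Fin n → WithBot ℤ)}
    (hS : SDet (S : Set (Fin n → WithBot ℤ)) Mbar) {a b : Fin n → ℤ}
    (hSab : ∀ s ∈ S, ∀ i (m : ℤ), s i = m → a i < m ∧ m ≤ b i) :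
    Nonempty ((proj_mono a b).functor ⋙ embZ_mono.functor ⋙ Mbar ≅ embZ_mono.functor ⋙ Mbar) := by
  have hproj c : (S : Set _) ∩ {x | x ≤ embZ (proj a b c)} =
      (S : Set _) ∩ {x | x ≤ embZ c} :=
    Set.ext fun s => and_congr_right fun hs => le_embZ_proj_iff (hSab s hs) c
  have hinf c : (S : Set _) ∩ {x | x ≤ embZ (c ⊓ proj a b c)} =
      (S : Set _) ∩ {x | x ≤ embZ c} :=
    Set.ext fun s => and_congr_right fun hs => by
      simp only [Set.mem_ofPred_eq, embZ_inf, le_inf_iff, le_embZ_proj_iff (hSab s hs), and_self]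
  have hmono : Monotone fun c => c ⊓ proj a b c := monotone_id.inf (proj_mono a b)
  exact ⟨(natIsoOfLE _ hmono (proj_mono a b) (fun _ => inf_le_right)
      fun c => hS.2 _ _ _ ((hinf c).trans (hproj c).symm)).symm ≪≫
    natIsoOfLE _ hmono monotone_id (fun _ => inf_le_left) fun c => hS.2 _ _ _ (hinf c)⟩

end ZBar

theorem stmt19_general (n : ℕ) (R : Type) [CommRing R]
    (M : (Fin n → ℤ) ⥤ ModuleCat R) (Mbar : (Fin n → WithBot ℤ) ⥤ ModuleCat R)
    (hext : IsExtension M Mbar) :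
    (∃ a b : Fin n → ℤ, a ≤ b ∧ Nonempty ((proj_mono a b).functor ⋙ M ≅ M)) ↔
    ∃ S : Finset (Fin n → WithBot ℤ), SDet (↑S : Set (Fin n → WithBot ℤ)) Mbar := by
  refine ⟨fun ⟨a, b, hab, ⟨η⟩⟩ => ⟨barIccFinset a b, sDet_barIccFinset hext hab η⟩,
    fun ⟨S, hS⟩ => ?_⟩
  obtain ⟨a, b, hab, hSab⟩ := exists_bounds_of_finset S
  obtain rfl := hext.1
  exact ⟨a, b, hab, nonempty_proj_iso_of_sDet hS hSab⟩

theorem stmt19 (n : ℕ) (R : Type) [CommRing R]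
    (M : (Fin n → ℤ) ⥤ ModuleCat R) (Mbar : (Fin n → WithBot ℤ) ⥤ ModuleCat R)
    (hext : IsExtension M Mbar)
    (hfp : ∀ c : Fin n → ℤ, Module.FinitePresentation R (M.obj c)) :
    (∃ a b : Fin n → ℤ, a ≤ b ∧ Nonempty ((proj_mono a b).functor ⋙ M ≅ M)) ↔
    ∃ S : Finset (Fin n → WithBot ℤ), SDet (↑S : Set (Fin n → WithBot ℤ)) Mbar :=
  stmt19_general n R M Mbar hext
end
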